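/- arXiv:1706.03034 — 3 statements merged into one kernel-verified Lean document; each statement's English description precedes it below -/
import Mathlib

section
/- Let Ω ⊂ ℝ^N be a bounded domain, 1 < q < p, and suppose the first Dirichlet eigenfunctions φ_p of the p-Laplacian and φ_q of the q-Laplacian are linearly independent. Then the Nehari manifold N_{α,β} is empty whenever (α,β) ∈ (−∞, λ₁(p)] × (−∞, λ₁(q)]. -/
/- STATEMENT 6: if the first eigenfunctions φ_p, φ_q are linearly independent, then the
Nehari manifold N_{α,β} is empty whenever α ≤ λ₁(p) and β ≤ λ₁(q).
`Dp u = ‖∇u‖_p^p`, `Np u = ‖u‖_p^p`, and Lemma 1.1 (the characterization of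
H_{λ₁(p)}(u) = 0, G_{λ₁(q)}(u) = 0) is taken as hypotheses. -/
theorem stmt_6 {V : Type*} [AddCommGroup V] [Module ℝ V]
    (p q : ℝ) (hq : 1 < q) (hpq : q < p)
    (Dp Np Dq Nq : V → ℝ) (lam1p lam1q : ℝ) (φp φq : V)
    (hNp : ∀ u : V, u ≠ 0 → 0 < Np u)
    (hNq : ∀ u : V, u ≠ 0 → 0 < Nq u)
    (hHpos : ∀ u : V, u ≠ 0 → 0 ≤ Dp u - lam1p * Np u)
    (hHeq : ∀ u : V, u ≠ 0 → (Dp u - lam1p * Np u = 0 ↔ ∃ c : ℝ, u = c • φp))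
    (hGpos : ∀ u : V, u ≠ 0 → 0 ≤ Dq u - lam1q * Nq u)
    (hGeq : ∀ u : V, u ≠ 0 → (Dq u - lam1q * Nq u = 0 ↔ ∃ c : ℝ, u = c • φq))
    (hLI : ∀ c : ℝ, φp ≠ c • φq)
    (α β : ℝ) (hα : α ≤ lam1p) (hβ : β ≤ lam1q) :
    ∀ u : V, u ≠ 0 → (Dp u - α * Np u) + (Dq u - β * Nq u) ≠ 0 := by
  intro u hu hsum
  have hNp' := hNp u hu
  have hNq' := hNq u hu
  have hH0 := hHpos u hu
  have hG0 := hGpos u hu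
  have hHα : Dp u - lam1p * Np u ≤ Dp u - α * Np u := by nlinarith
  have hGβ : Dq u - lam1q * Nq u ≤ Dq u - β * Nq u := by nlinarith
  have hH : Dp u - lam1p * Np u = 0 := by nlinarith
  have hG : Dq u - lam1q * Nq u = 0 := by nlinarith
  obtain ⟨c, hc⟩ := (hHeq u hu).mp hH
  obtain ⟨d, hd⟩ := (hGeq u hu).mp hG
  have hc0 : c ≠ 0 := by rintro rfl; simp at hc; exact hu hc
  apply hLI (c⁻¹ * d)
  have : c • φp = d • φq := hc ▸ hd
  calc φp = c⁻¹ • (c • φp) := by rw [smul_smul, inv_mul_cancel₀ hc0, one_smul]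
    _ = (c⁻¹ * d) • φq := by rw [this, smul_smul]
end

section
/- Let Ω ⊂ ℝ (N = 1) be a bounded open interval, 1 < q < p, and let φ, ψ be nontrivial Dirichlet eigenfunctions of the one-dimensional p-Laplacian (−(|u′|^{p−2}u′)′ = λ|u|^{p−2}u) and q-Laplacian respectively on Ω. Then φ and ψ are linearly independent, i.e., φ ∉ ℝψ. -/
/-!
If `φ = c ψ`, then `φ` itself solves both equations: the `p`-equation by assumption and, up to the
factor `|c|^{q-2} c`, the `q`-equation, so both fluxes `|φ'|^{p-2} φ'` and `|φ'|^{q-2} φ'` are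
differentiable. At an interior extremum `x` of `φ` we have `φ'(x) = 0` and `φ(x) ≠ 0`. The
`p`-flux is `G ∘ (q-flux)` with `G(s) = |s|^{α-1} s`, `α = (p-1)/(q-1) > 1`, and `G'(0) = 0`;
hence the `p`-flux has derivative `0` at `x`, i.e. `λ_p |φ(x)|^{p-2} φ(x) = 0`. But `λ_p ≠ 0`:
otherwise the `p`-flux, hence `φ'`, would vanish identically and `φ ≡ 0`.
-/

open Set Filter Topology

/-- `φ_r(t) = |t|^{r-2} t`, the flux of the `r`-Laplacian `(φ_r(u'))'`. -/
noncomputable def signedRpow (r t : ℝ) : ℝ := |t| ^ (r - 2) * t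

section signedRpow

variable {r : ℝ}

@[simp]
lemma signedRpow_zero (r : ℝ) : signedRpow r 0 = 0 := by
  simp [signedRpow]

lemma signedRpow_eq_zero_iff {t : ℝ} : signedRpow r t = 0 ↔ t = 0 := by
  rcases eq_or_ne t 0 with rfl | ht
  · simp
  · simp [signedRpow, ht, (Real.rpow_pos_of_pos (abs_pos.2 ht) _).ne']

lemma signedRpow_mul (c t : ℝ) : signedRpow r (c * t) = signedRpow r c * signedRpow r t := by
  simp only [signedRpow, abs_mul, Real.mul_rpow (abs_nonneg c) (abs_nonneg t)]
  ring

lemma abs_signedRpow (hr : 1 < r) (t : ℝ) : |signedRpow r t| = |t| ^ (r - 1) := by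
  rcases eq_or_ne t 0 with rfl | ht
  · simp [Real.zero_rpow (by linarith : r - 1 ≠ 0)]
  · rw [signedRpow, abs_mul, abs_of_nonneg (Real.rpow_nonneg (abs_nonneg t) _),
      ← Real.rpow_add_one (abs_ne_zero.2 ht)]
    ring_nf

lemma signedRpow_signedRpow {p q : ℝ} (hq : 1 < q) (t : ℝ) :
    signedRpow ((p - 1) / (q - 1) + 1) (signedRpow q t) = signedRpow p t := by
  rcases eq_or_ne t 0 with rfl | ht
  · simp
  have hexp : (q - 1) * ((p - 1) / (q - 1) + 1 - 2) + (q - 2) = p - 2 := by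
    field_simp [(by linarith : q - 1 ≠ 0)]
    ring
  rw [signedRpow, abs_signedRpow hq, ← Real.rpow_mul (abs_nonneg t), signedRpow, ← mul_assoc,
    ← Real.rpow_add (abs_pos.2 ht), hexp, signedRpow]

lemma hasDerivAt_signedRpow_zero (hr : 2 < r) : HasDerivAt (signedRpow r) 0 0 := by
  rw [hasDerivAt_iff_tendsto_slope_zero]
  have hcont : Tendsto (fun t : ℝ => |t| ^ (r - 2)) (𝓝[≠] 0) (𝓝 0) := by
    have hc : Continuous fun t : ℝ => |t| ^ (r - 2) :=
      continuous_abs.rpow_const fun _ => Or.inr (by linarith)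
    have := hc.tendsto 0
    rw [abs_zero, Real.zero_rpow (by linarith)] at this
    exact this.mono_left nhdsWithin_le_nhds
  refine hcont.congr' ?_
  filter_upwards [self_mem_nhdsWithin] with t (ht : t ≠ 0)
  rw [zero_add, signedRpow_zero, sub_zero, smul_eq_mul, signedRpow]
  field_simp

lemma HasDerivAt.signedRpow_of_eq_zero {p q D x : ℝ} {f : ℝ → ℝ} (hq : 1 < q) (hpq : q < p)
    (hf : HasDerivAt (fun y => signedRpow q (f y)) D x) (hfx : f x = 0) :
    HasDerivAt (fun y => signedRpow p (f y)) 0 x := by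
  have hα : 2 < (p - 1) / (q - 1) + 1 := by
    rw [← sub_lt_iff_lt_add, lt_div_iff₀ (by linarith)]
    linarith
  have hG : HasDerivAt (signedRpow ((p - 1) / (q - 1) + 1)) 0 (signedRpow q (f x)) := by
    rw [hfx, signedRpow_zero]
    exact hasDerivAt_signedRpow_zero hα
  simpa only [Function.comp_def, signedRpow_signedRpow hq, zero_mul] using hG.comp x hf

end signedRpow

section Dirichlet

variable {a b : ℝ} {u u' : ℝ → ℝ}

lemma exists_ne_zero_hasDerivAt_eq_zero (hc : ContinuousOn u (Icc a b)) (ha : u a = 0)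
    (hb : u b = 0) (hne : ∃ x ∈ Ioo a b, u x ≠ 0) (hd : ∀ x ∈ Ioo a b, HasDerivAt u (u' x) x) :
    ∃ x ∈ Ioo a b, u x ≠ 0 ∧ u' x = 0 := by
  obtain ⟨x₀, hx₀, hux₀⟩ := hne
  obtain ⟨x, hx, hmax⟩ := isCompact_Icc.exists_isMaxOn
    ⟨x₀, Ioo_subset_Icc_self hx₀⟩ (hc.pow 2)
  have hux : u x ≠ 0 := fun h0 =>
    (sq_pos_of_ne_zero hux₀).not_ge (by simpa [h0] using hmax (Ioo_subset_Icc_self hx₀))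
  have hx' : x ∈ Ioo a b :=
    ⟨hx.1.lt_of_ne (by rintro rfl; exact hux ha), hx.2.lt_of_ne (by rintro rfl; exact hux hb)⟩
  have hlocal : IsLocalMax (fun y => u y ^ 2) x :=
    hmax.localize.isLocalMax (Icc_mem_nhds hx'.1 hx'.2)
  have hderiv := hlocal.hasDerivAt_eq_zero ((hd x hx').pow 2)
  refine ⟨x, hx', hux, ?_⟩
  simpa [hux] using hderiv

lemma dirichlet_eigenvalue_ne_zero {r lam : ℝ} (hc : ContinuousOn u (Icc a b)) (ha : u a = 0)
    (hb : u b = 0) (hne : ∃ x ∈ Ioo a b, u x ≠ 0) (hd : ∀ x ∈ Ioo a b, HasDerivAt u (u' x) x)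
    (heq : ∀ x ∈ Ioo a b,
      HasDerivAt (fun y => signedRpow r (u' y)) (-lam * |u x| ^ (r - 2) * u x) x) :
    lam ≠ 0 := by
  rintro rfl
  obtain ⟨x₀, hx₀, -, hu'x₀⟩ := exists_ne_zero_hasDerivAt_eq_zero hc ha hb hne hd
  have hflux : ∀ x ∈ Ioo a b, HasDerivAt (fun y => signedRpow r (u' y)) 0 x := fun x hx => by
    simpa using heq x hx
  have hu' : ∀ x ∈ Ioo a b, u' x = 0 := fun x hx => by
    have hconst := isOpen_Ioo.is_const_of_deriv_eq_zero isPreconnected_Ioo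
      (fun y hy => (hflux y hy).differentiableAt.differentiableWithinAt)
      (fun y hy => (hflux y hy).deriv) hx hx₀
    rwa [hu'x₀, signedRpow_zero, signedRpow_eq_zero_iff] at hconst
  obtain ⟨x₁, hx₁, hux₁⟩ := hne
  obtain ⟨y, hy, hslope⟩ := exists_hasDerivAt_eq_slope u u' hx₁.1
    (hc.mono (Icc_subset_Icc_right hx₁.2.le)) fun x hx => hd x ⟨hx.1, hx.2.trans hx₁.2⟩
  rw [hu' y ⟨hy.1, hy.2.trans hx₁.2⟩, ha, sub_zero, eq_comm, div_eq_zero_iff] at hslope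
  exact hslope.elim hux₁ (sub_ne_zero.2 hx₁.1.ne')

end Dirichlet

theorem stmt_13_general (a b : ℝ)
    (p q lamp lamq : ℝ) (hq : 1 < q) (hpq : q < p)
    (φ ψ φ' ψ' : ℝ → ℝ)
    (hφcont : ContinuousOn φ (Set.Icc a b))
    (hφa : φ a = 0) (hφb : φ b = 0)
    (hφne : ∃ x ∈ Set.Ioo a b, φ x ≠ 0)
    (hφd : ∀ x ∈ Set.Ioo a b, HasDerivAt φ (φ' x) x)
    (hψd : ∀ x ∈ Set.Ioo a b, HasDerivAt ψ (ψ' x) x)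
    (hφeq : ∀ x ∈ Set.Ioo a b,
      HasDerivAt (fun y => |φ' y| ^ (p - 2) * φ' y) (-lamp * |φ x| ^ (p - 2) * φ x) x)
    (hψeq : ∀ x ∈ Set.Ioo a b,
      HasDerivAt (fun y => |ψ' y| ^ (q - 2) * ψ' y) (-lamq * |ψ x| ^ (q - 2) * ψ x) x) :
    ∀ c : ℝ, ¬ (∀ x ∈ Set.Ioo a b, φ x = c * ψ x) := by
  intro c h
  have hlamp := dirichlet_eigenvalue_ne_zero hφcont hφa hφb hφne hφd hφeq
  obtain ⟨x, hx, hφx, hφ'x⟩ := exists_ne_zero_hasDerivAt_eq_zero hφcont hφa hφb hφne hφd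
  have hφ' : ∀ᶠ y in 𝓝 x, φ' y = c * ψ' y := by
    filter_upwards [isOpen_Ioo.mem_nhds hx] with y hy
    refine (hφd y hy).unique (((hψd y hy).const_mul c).congr_of_eventuallyEq ?_)
    filter_upwards [isOpen_Ioo.mem_nhds hy] with z hz
    exact h z hz
  have hqflux : HasDerivAt (fun y => signedRpow q (φ' y))
      (signedRpow q c * (-lamq * |ψ x| ^ (q - 2) * ψ x)) x := by
    refine ((hψeq x hx).const_mul (signedRpow q c)).congr_of_eventuallyEq ?_
    filter_upwards [hφ'] with y hy
    rw [hy, signedRpow_mul]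
    rfl
  have hzero := (hφeq x hx).unique (hqflux.signedRpow_of_eq_zero hq hpq hφ'x)
  simp only [mul_eq_zero, neg_eq_zero, hlamp, hφx, (Real.rpow_pos_of_pos (abs_pos.2 hφx) _).ne',
    or_self] at hzero

theorem stmt_13 (a b : ℝ) (hab : a < b)
    (p q lamp lamq : ℝ) (hq : 1 < q) (hpq : q < p)
    (φ ψ φ' ψ' : ℝ → ℝ)
    (hφcont : ContinuousOn φ (Set.Icc a b)) (hψcont : ContinuousOn ψ (Set.Icc a b))
    (hφa : φ a = 0) (hφb : φ b = 0) (hψa : ψ a = 0) (hψb : ψ b = 0)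
    (hφne : ∃ x ∈ Set.Ioo a b, φ x ≠ 0) (hψne : ∃ x ∈ Set.Ioo a b, ψ x ≠ 0)
    (hφd : ∀ x ∈ Set.Ioo a b, HasDerivAt φ (φ' x) x)
    (hψd : ∀ x ∈ Set.Ioo a b, HasDerivAt ψ (ψ' x) x)
    (hφeq : ∀ x ∈ Set.Ioo a b,
      HasDerivAt (fun y => |φ' y| ^ (p - 2) * φ' y) (-lamp * |φ x| ^ (p - 2) * φ x) x)
    (hψeq : ∀ x ∈ Set.Ioo a b,
      HasDerivAt (fun y => |ψ' y| ^ (q - 2) * ψ' y) (-lamq * |ψ x| ^ (q - 2) * ψ x) x) :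
    ∀ c : ℝ, ¬ (∀ x ∈ Set.Ioo a b, φ x = c * ψ x) :=
  stmt_13_general a b p q lamp lamq hq hpq φ ψ φ' ψ' hφcont hφa hφb hφne hφd hψd hφeq hψeq
end

section
/- Let 1 < q < p, α = α_* := ‖∇φ_q‖_p^p/‖φ_q‖_p^p, and β = λ₁(q). Then tφ_q ∈ N_{α,β} for every t ≠ 0 and E_{α,β}(tφ_q) = 0; moreover d(α,β) := inf{E_{α,β}(u) : u ∈ N_{α,β}} = 0, and every minimizer u₀ of d(α,β) satisfies u₀ ∈ ℝφ_q \ {0}. -/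
/-! On the Nehari set `H u + G u = 0` the energy `H u / p + G u / q` equals `(p - q) / (p q) · G u`,
which is nonnegative because `G ≥ 0` (variational characterisation of `λ₁(q)`), and vanishes exactly
when `G u = 0`, i.e. when `u ∈ ℝφ_q` by simplicity of `λ₁(q)`. For `α = α_*` the functional `H`
vanishes on the whole line `ℝφ_q` by homogeneity, so this line lies in the Nehari set at energy `0`. -/

lemma div_add_div_eq_of_add_eq_zero {a b p q : ℝ} (hp : p ≠ 0) (hq : q ≠ 0) (h : a + b = 0) :
    a / p + b / q = (p - q) / (p * q) * b := by
  rw [eq_neg_of_add_eq_zero_left h]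
  field_simp
  ring

lemma sub_div_mul_smul_eq_zero {V : Type*} [SMul ℝ V] {D N : V → ℝ} {p : ℝ}
    (hD : ∀ (t : ℝ) (u : V), D (t • u) = |t| ^ p * D u)
    (hN : ∀ (t : ℝ) (u : V), N (t • u) = |t| ^ p * N u) {φ : V} (hφ : N φ ≠ 0) (t : ℝ) :
    D (t • φ) - D φ / N φ * N (t • φ) = 0 := by
  rw [hD, hN]
  field_simp
  ring

section Nehari

variable {V : Type*} {p q : ℝ} {H G E : V → ℝ}

lemma energy_eq_of_nehari (hq : 0 < q) (hpq : q < p)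
    (hE : ∀ u, E u = H u / p + G u / q) {u : V} (hu : H u + G u = 0) :
    E u = (p - q) / (p * q) * G u := by
  rw [hE, div_add_div_eq_of_add_eq_zero (by linarith) hq.ne' hu]

lemma energy_nonneg_of_nehari (hq : 0 < q) (hpq : q < p) (hG : ∀ u, 0 ≤ G u)
    (hE : ∀ u, E u = H u / p + G u / q) {u : V} (hu : H u + G u = 0) : 0 ≤ E u := by
  rw [energy_eq_of_nehari hq hpq hE hu]
  exact mul_nonneg (div_nonneg (by linarith) (by nlinarith)) (hG u)

lemma eq_zero_of_nehari_of_energy_eq_zero (hq : 0 < q) (hpq : q < p)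
    (hE : ∀ u, E u = H u / p + G u / q) {u : V} (hu : H u + G u = 0) (hEu : E u = 0) :
    G u = 0 := by
  rw [energy_eq_of_nehari hq hpq hE hu] at hEu
  exact (mul_eq_zero.mp hEu).resolve_left (div_ne_zero (by linarith) (by nlinarith))

theorem nehari_ground_states_eq_line [AddCommGroup V] [Module ℝ V] (hq : 0 < q) (hpq : q < p) {φ : V} (hφ : φ ≠ 0)
    (hHφ : ∀ t : ℝ, H (t • φ) = 0) (hG : ∀ u, 0 ≤ G u)
    (hGeq : ∀ u : V, u ≠ 0 → (G u = 0 ↔ ∃ c : ℝ, u = c • φ))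
    (hE : ∀ u, E u = H u / p + G u / q) :
    (∀ t : ℝ, t ≠ 0 → t • φ ≠ 0 ∧ H (t • φ) + G (t • φ) = 0 ∧ E (t • φ) = 0) ∧
    sInf {r : ℝ | ∃ u : V, u ≠ 0 ∧ H u + G u = 0 ∧ r = E u} = 0 ∧
    (∀ u : V, u ≠ 0 → H u + G u = 0 → E u = 0 → ∃ c : ℝ, c ≠ 0 ∧ u = c • φ) := by
  have on_line : ∀ t : ℝ, t ≠ 0 → t • φ ≠ 0 ∧ H (t • φ) + G (t • φ) = 0 ∧ E (t • φ) = 0 := by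
    intro t ht
    have hne : t • φ ≠ 0 := smul_ne_zero ht hφ
    have hGt : G (t • φ) = 0 := (hGeq _ hne).mpr ⟨t, rfl⟩
    refine ⟨hne, by rw [hHφ, hGt, add_zero], ?_⟩
    rw [hE, hHφ, hGt, zero_div, zero_div, add_zero]
  refine ⟨on_line, ?_, ?_⟩
  · have hmem : (0 : ℝ) ∈ {r : ℝ | ∃ u : V, u ≠ 0 ∧ H u + G u = 0 ∧ r = E u} :=
      let ⟨hne, hnehari, hE0⟩ := on_line 1 one_ne_zero
      ⟨_, hne, hnehari, hE0.symm⟩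
    have hlb : ∀ r ∈ {r : ℝ | ∃ u : V, u ≠ 0 ∧ H u + G u = 0 ∧ r = E u}, 0 ≤ r := by
      rintro r ⟨u, -, hu, rfl⟩
      exact energy_nonneg_of_nehari hq hpq hG hE hu
    exact le_antisymm (csInf_le ⟨0, hlb⟩ hmem) (le_csInf ⟨0, hmem⟩ hlb)
  · intro u hu hnehari hEu
    obtain ⟨c, rfl⟩ := (hGeq u hu).mp (eq_zero_of_nehari_of_energy_eq_zero hq hpq hE hnehari hEu)
    exact ⟨c, left_ne_zero_of_smul hu, rfl⟩

end Nehari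

theorem stmt_15_general {V : Type*} [AddCommGroup V] [Module ℝ V]
    (p q : ℝ) (hq : 1 < q) (hpq : q < p)
    (Dp Np Dq Nq : V → ℝ) (lam1q : ℝ) (φq : V) (hφq : φq ≠ 0)
    (hDphom : ∀ (t : ℝ) (u : V), Dp (t • u) = |t| ^ p * Dp u)
    (hNphom : ∀ (t : ℝ) (u : V), Np (t • u) = |t| ^ p * Np u)
    (hG : ∀ u : V, 0 ≤ Dq u - lam1q * Nq u)
    (hGeq : ∀ u : V, u ≠ 0 → (Dq u - lam1q * Nq u = 0 ↔ ∃ c : ℝ, u = c • φq))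
    (hNpφq : 0 < Np φq)
    (E : V → ℝ)
    (hE : ∀ u, E u = (Dp u - (Dp φq / Np φq) * Np u) / p + (Dq u - lam1q * Nq u) / q) :
    (∀ t : ℝ, t ≠ 0 →
        t • φq ≠ 0 ∧
        (Dp (t • φq) - (Dp φq / Np φq) * Np (t • φq))
          + (Dq (t • φq) - lam1q * Nq (t • φq)) = 0 ∧
        E (t • φq) = 0) ∧
    sInf {r : ℝ | ∃ u : V, u ≠ 0 ∧
        (Dp u - (Dp φq / Np φq) * Np u) + (Dq u - lam1q * Nq u) = 0 ∧ r = E u} = 0 ∧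
    (∀ u : V, u ≠ 0 →
        (Dp u - (Dp φq / Np φq) * Np u) + (Dq u - lam1q * Nq u) = 0 →
        E u = 0 → ∃ c : ℝ, c ≠ 0 ∧ u = c • φq) :=
  nehari_ground_states_eq_line (H := fun u => Dp u - (Dp φq / Np φq) * Np u)
    (G := fun u => Dq u - lam1q * Nq u) (by linarith) hpq hφq
    (sub_div_mul_smul_eq_zero hDphom hNphom hNpφq.ne') hG hGeq hE

theorem stmt_15 {V : Type*} [AddCommGroup V] [Module ℝ V]
    (p q : ℝ) (hq : 1 < q) (hpq : q < p)
    (Dp Np Dq Nq : V → ℝ) (lam1q : ℝ) (φq : V) (hφq : φq ≠ 0)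
    (hDphom : ∀ (t : ℝ) (u : V), Dp (t • u) = |t| ^ p * Dp u)
    (hNphom : ∀ (t : ℝ) (u : V), Np (t • u) = |t| ^ p * Np u)
    (hDqhom : ∀ (t : ℝ) (u : V), Dq (t • u) = |t| ^ q * Dq u)
    (hNqhom : ∀ (t : ℝ) (u : V), Nq (t • u) = |t| ^ q * Nq u)
    (hG : ∀ u : V, 0 ≤ Dq u - lam1q * Nq u)
    (hGeq : ∀ u : V, u ≠ 0 → (Dq u - lam1q * Nq u = 0 ↔ ∃ c : ℝ, u = c • φq))
    (hNpφq : 0 < Np φq)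
    (E : V → ℝ)
    (hE : ∀ u, E u = (Dp u - (Dp φq / Np φq) * Np u) / p + (Dq u - lam1q * Nq u) / q) :
    (∀ t : ℝ, t ≠ 0 →
        t • φq ≠ 0 ∧
        (Dp (t • φq) - (Dp φq / Np φq) * Np (t • φq))
          + (Dq (t • φq) - lam1q * Nq (t • φq)) = 0 ∧
        E (t • φq) = 0) ∧
    sInf {r : ℝ | ∃ u : V, u ≠ 0 ∧
        (Dp u - (Dp φq / Np φq) * Np u) + (Dq u - lam1q * Nq u) = 0 ∧ r = E u} = 0 ∧
    (∀ u : V, u ≠ 0 →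
        (Dp u - (Dp φq / Np φq) * Np u) + (Dq u - lam1q * Nq u) = 0 →
        E u = 0 → ∃ c : ℝ, c ≠ 0 ∧ u = c • φq) :=
  stmt_15_general p q hq hpq Dp Np Dq Nq lam1q φq hφq hDphom hNphom hG hGeq hNpφq E hE
end
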